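/- For every q ∈ 𝔯, the determinant of 𝓗(q) is negative: -2 - 1/|q|³ - 2/|q|⁶ + (6q₂² - 3q₁²)/|q|⁵ < 0. Consequently the symmetric matrix 𝓗(q) has one positive and one negative eigenvalue. -/

import Mathlib

open Matrix

noncomputable section

/-- Euclidean norm of a point of `ℝ²`. -/
def nrm (q : ℝ × ℝ) : ℝ := Real.sqrt (q.1 ^ 2 + q.2 ^ 2)

/-- Hill's region `𝔯`. -/
def HillRegion : Set (ℝ × ℝ) :=
  {q | (3:ℝ) ^ ((4:ℝ)/3) / 2 < 1 / nrm q + (3/2) * q.1 ^ 2 ∧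
       |q.1| < (3:ℝ) ^ (-(1:ℝ)/3) ∧ |q.2| < 2 * (3:ℝ) ^ (-(4:ℝ)/3)}

/-- The symmetric matrix `𝓗(q)`. -/
def Hmat (q : ℝ × ℝ) : Matrix (Fin 2) (Fin 2) ℝ :=
  (1 / (nrm q) ^ 5) •
    !![-2 * (nrm q) ^ 5 + (nrm q) ^ 2 - 3 * q.1 ^ 2, -3 * q.1 * q.2;
       -3 * q.1 * q.2, (nrm q) ^ 5 + (nrm q) ^ 2 - 3 * q.2 ^ 2]

theorem Matrix.IsHermitian.exists_eigenvectors_pos_neg_of_det_neg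
    {A : Matrix (Fin 2) (Fin 2) ℝ} (hA : A.IsHermitian) (hdet : A.det < 0) :
    ∃ (lp ln : ℝ) (vp vn : Fin 2 → ℝ), 0 < lp ∧ ln < 0 ∧ vp ≠ 0 ∧ vn ≠ 0 ∧
      A *ᵥ vp = lp • vp ∧ A *ᵥ vn = ln • vn := by
  have eigenvector (i : Fin 2) :
      (hA.eigenvectorBasis i).ofLp ≠ 0 ∧
        A *ᵥ hA.eigenvectorBasis i = hA.eigenvalues i • (hA.eigenvectorBasis i).ofLp :=
    ⟨(WithLp.ofLp_eq_zero 2).ne.2 (hA.eigenvectorBasis.orthonormal.ne_zero i),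
      hA.mulVec_eigenvectorBasis i⟩
  have hprod : hA.eigenvalues 0 * hA.eigenvalues 1 < 0 := by
    simpa [hA.det_eq_prod_eigenvalues, Fin.prod_univ_two] using hdet
  rcases mul_neg_iff.1 hprod with ⟨h0, h1⟩ | ⟨h0, h1⟩
  · exact ⟨_, _, _, _, h0, h1, (eigenvector 0).1, (eigenvector 1).1,
      (eigenvector 0).2, (eigenvector 1).2⟩
  · exact ⟨_, _, _, _, h1, h0, (eigenvector 1).1, (eigenvector 0).1,
      (eigenvector 1).2, (eigenvector 0).2⟩

theorem sq_nrm (q : ℝ × ℝ) : nrm q ^ 2 = q.1 ^ 2 + q.2 ^ 2 :=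
  Real.sq_sqrt (by positivity)

theorem isHermitian_Hmat (q : ℝ × ℝ) : (Hmat q).IsHermitian := by
  refine IsHermitian.ext fun i j => ?_
  fin_cases i <;> fin_cases j <;> simp [Hmat]

theorem det_Hmat {q : ℝ × ℝ} (hq : nrm q ≠ 0) :
    (Hmat q).det = -2 - 1 / (nrm q) ^ 3 - 2 / (nrm q) ^ 6
      + (6 * q.2 ^ 2 - 3 * q.1 ^ 2) / (nrm q) ^ 5 := by
  rw [Hmat, det_smul, det_fin_two_of, Fintype.card_fin]
  field_simp
  linear_combination (3 * nrm q ^ 2) * sq_nrm q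

/-- The bound on `q₁` turns the defining inequality of the Hill region into `3^(1/3) < 1 / |q|`. -/
theorem nrm_pos_and_three_mul_nrm_pow_three_lt_one {q : ℝ × ℝ} (hq : q ∈ HillRegion) :
    0 < nrm q ∧ 3 * nrm q ^ 3 < 1 := by
  obtain ⟨hpot, hq1, -⟩ := hq
  set c := (3:ℝ) ^ ((1:ℝ) / 3) with hc
  have hc0 : 0 < c := by positivity
  have hc3 : c ^ 3 = 3 := by
    rw [hc, ← Real.rpow_natCast, ← Real.rpow_mul (by norm_num)]
    norm_num
  have h43 : (3:ℝ) ^ ((4:ℝ) / 3) = 3 * c := by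
    rw [hc, ← Real.rpow_one_add' (by norm_num) (by norm_num)]
    norm_num
  have hm13 : (3:ℝ) ^ (-(1:ℝ) / 3) = c⁻¹ := by
    rw [hc, ← Real.rpow_neg (by norm_num)]
    norm_num
  have hq1sq : q.1 ^ 2 < c / 3 := by
    have : c⁻¹ ^ 2 = c / 3 := by field_simp; linarith
    rw [← this]
    exact sq_lt_sq' (by linarith [neg_abs_le q.1]) ((le_abs_self q.1).trans_lt (hm13 ▸ hq1))
  have hinv : c < 1 / nrm q := by rw [h43] at hpot; linarith
  have hr : 0 < nrm q := by
    by_contra! h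
    rw [le_antisymm h (Real.sqrt_nonneg _), div_zero] at hinv
    linarith
  refine ⟨hr, ?_⟩
  have hcr : c * nrm q < 1 := (lt_div_iff₀ hr).1 hinv
  have := pow_lt_one₀ (by positivity) hcr (n := 3) (by norm_num)
  rwa [mul_pow, hc3] at this

theorem hessian_det_formula_neg {q : ℝ × ℝ} (hq : 0 < nrm q) (hsmall : 2 * nrm q ^ 3 < 1) :
    -2 - 1 / (nrm q) ^ 3 - 2 / (nrm q) ^ 6
      + (6 * q.2 ^ 2 - 3 * q.1 ^ 2) / (nrm q) ^ 5 < 0 := by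
  set r := nrm q
  have hq2 : q.2 ^ 2 ≤ r ^ 2 := by nlinarith [sq_nrm q, sq_nonneg q.1]
  -- Bounding `6 q₂² - 3 q₁²` by `6 r²` leaves `(2r³ - 1)(2 - r³)` as the numerator.
  have hnum : -2 * r ^ 6 - r ^ 3 - 2 + (6 * q.2 ^ 2 - 3 * q.1 ^ 2) * r < 0 := by
    nlinarith [mul_le_mul_of_nonneg_right hq2 hq.le, mul_nonneg (sq_nonneg q.1) hq.le,
      mul_pos (by linarith : 0 < 1 - 2 * r ^ 3) (by nlinarith : 0 < 2 - r ^ 3)]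
  have hform : -2 - 1 / r ^ 3 - 2 / r ^ 6 + (6 * q.2 ^ 2 - 3 * q.1 ^ 2) / r ^ 5
      = (-2 * r ^ 6 - r ^ 3 - 2 + (6 * q.2 ^ 2 - 3 * q.1 ^ 2) * r) / r ^ 6 := by
    field_simp
  rw [hform]
  exact div_neg_of_neg_of_pos hnum (by positivity)

theorem hessian_det_negative (q : ℝ × ℝ) (hq : q ∈ HillRegion) :
    (Hmat q).det < 0 ∧
    -2 - 1 / (nrm q) ^ 3 - 2 / (nrm q) ^ 6
      + (6 * q.2 ^ 2 - 3 * q.1 ^ 2) / (nrm q) ^ 5 < 0 ∧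
    ∃ (lp ln : ℝ) (vp vn : Fin 2 → ℝ), 0 < lp ∧ ln < 0 ∧ vp ≠ 0 ∧ vn ≠ 0 ∧
      (Hmat q).mulVec vp = lp • vp ∧ (Hmat q).mulVec vn = ln • vn := by
  obtain ⟨hpos, hsmall⟩ := nrm_pos_and_three_mul_nrm_pow_three_lt_one hq
  have hformula := hessian_det_formula_neg hpos (by nlinarith [pow_pos hpos 3])
  have hdet : (Hmat q).det < 0 := det_Hmat hpos.ne' ▸ hformula
  exact ⟨hdet, hformula, (isHermitian_Hmat q).exists_eigenvectors_pos_neg_of_det_neg hdet⟩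

end
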